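/- Let A = ℝ[x_k, y_k, w_k : k ∈ ℕ] with derivation D determined by D x_k = x_{k+1}, D y_k = y_{k+1}, D w_k = w_{k+1}. Define the bracket [a,b] = a·Db − b·Da, the covariant derivative ∇_a b = a·Db + (1/2)·y₀·a·b, and let φ : A → A be the derivation determined on generators by φ(x_k) = D^k(x₀·w₁ − x₁·w₀), φ(y_k) = −D^{k+1}(y₀·w₀) − 2·w_{k+2}, and φ(w_k) = 0. If v₁, v₂ ∈ ℝ[x_k, y_k : k ∈ ℕ] satisfy φ(v_i) = [v_i, w₀] for i = 1, 2, then φ(∇_{v₁} v₂) = [∇_{v₁} v₂, w₀]. -/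
import Mathlib


open MvPolynomial

/-- `ℝ[x_k, y_k, w_k : k ∈ ℕ]`, with `x_k = X (0,k)`, `y_k = X (1,k)`, `w_k = X (2,k)`. -/
noncomputable abbrev A3 : Type := MvPolynomial (Fin 3 × ℕ) ℝ

noncomputable def xv (k : ℕ) : A3 := X (0, k)
noncomputable def yv (k : ℕ) : A3 := X (1, k)
noncomputable def wv (k : ℕ) : A3 := X (2, k)

/-- The derivation with `D x_k = x_{k+1}`, `D y_k = y_{k+1}`, `D w_k = w_{k+1}`. -/
noncomputable def D3 : Derivation ℝ A3 A3 :=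
  mkDerivation ℝ fun v => X (v.1, v.2 + 1)

/-- The bracket `[a, b] = a·Db − b·Da`. -/
noncomputable def bracket3 (a b : A3) : A3 := a * D3 b - b * D3 a

/-- The covariant derivative `∇_a b = a·Db + (1/2)·y₀·a·b`. -/
noncomputable def nabla3 (a b : A3) : A3 := a * D3 b + (1 / 2 : ℝ) • (yv 0 * a * b)

/-- The geometric map `φ`, a derivation with `φ(x_k) = D^k(x₀w₁ − x₁w₀)`,
`φ(y_k) = −D^{k+1}(y₀w₀) − 2 w_{k+2}` and `φ(w_k) = 0`. -/
noncomputable def phiGeo : Derivation ℝ A3 A3 :=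
  mkDerivation ℝ fun v =>
    if v.1 = 0 then (⇑D3)^[v.2] (xv 0 * wv 1 - xv 1 * wv 0)
    else if v.1 = 1 then -(⇑D3)^[v.2 + 1] (yv 0 * wv 0) - 2 * wv (v.2 + 2)
    else 0

/-- The subalgebra `ℝ[x_k, y_k : k ∈ ℕ]` of `A3`. -/
noncomputable def XY : Subalgebra ℝ A3 :=
  Algebra.adjoin ℝ (Set.range xv ∪ Set.range yv)

lemma D3_X (i : Fin 3) (k : ℕ) : D3 (X (i, k)) = X (i, k + 1) :=
  mkDerivation_X ℝ _ _

lemma D3_xv (k : ℕ) : D3 (xv k) = xv (k + 1) := D3_X 0 k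
lemma D3_yv (k : ℕ) : D3 (yv k) = yv (k + 1) := D3_X 1 k
lemma D3_wv (k : ℕ) : D3 (wv k) = wv (k + 1) := D3_X 2 k

lemma D3_two : D3 (2 : A3) = 0 := by
  rw [show (2 : A3) = algebraMap ℝ A3 2 from (map_ofNat _ 2).symm, Derivation.map_algebraMap]

lemma phi_X (i : Fin 3) (k : ℕ) : phiGeo (X (i, k)) =
    if i = 0 then (⇑D3)^[k] (xv 0 * wv 1 - xv 1 * wv 0)
    else if i = 1 then -(⇑D3)^[k + 1] (yv 0 * wv 0) - 2 * wv (k + 2)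
    else 0 :=
  mkDerivation_X ℝ _ _

lemma phi_xv (k : ℕ) : phiGeo (xv k) = (⇑D3)^[k] (xv 0 * wv 1 - xv 1 * wv 0) := by
  conv_lhs => rw [xv]
  rw [phi_X, if_pos rfl]

lemma phi_yv (k : ℕ) :
    phiGeo (yv k) = -(⇑D3)^[k + 1] (yv 0 * wv 0) - 2 * wv (k + 2) := by
  conv_lhs => rw [yv]
  rw [phi_X, if_neg (by decide), if_pos rfl]

lemma phi_wv (k : ℕ) : phiGeo (wv k) = 0 := by
  conv_lhs => rw [wv]
  rw [phi_X, if_neg (by decide), if_neg (by decide)]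

lemma phi_D3_comm (p : A3) : phiGeo (D3 p) = D3 (phiGeo p) := by
  have hz : ⁅phiGeo, D3⁆ = (0 : Derivation ℝ A3 A3) := by
    apply derivation_ext
    rintro ⟨i, k⟩
    rw [Derivation.commutator_apply, Derivation.zero_apply, sub_eq_zero]
    fin_cases i
    · show phiGeo (D3 (xv k)) = D3 (phiGeo (xv k))
      rw [D3_xv, phi_xv, phi_xv, ← Function.iterate_succ_apply' (⇑D3) k]
    · show phiGeo (D3 (yv k)) = D3 (phiGeo (yv k))
      rw [D3_yv, phi_yv, phi_yv, map_sub, map_neg, Derivation.leibniz, D3_two, D3_wv,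
        ← Function.iterate_succ_apply' (⇑D3) (k + 1)]
      simp only [smul_eq_mul]
      ring
    · show phiGeo (D3 (wv k)) = D3 (phiGeo (wv k))
      rw [D3_wv, phi_wv, phi_wv, map_zero]
  have := DFunLike.congr_fun hz p
  rw [Derivation.commutator_apply, Derivation.zero_apply, sub_eq_zero] at this
  exact this

lemma phi_yv0 : phiGeo (yv 0) = -(yv 1 * wv 0 + yv 0 * wv 1) - 2 * wv 2 := by
  rw [phi_yv 0, show (0 + 1 : ℕ) = 1 from rfl, Function.iterate_one, Derivation.leibniz,
    D3_wv, D3_yv]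
  simp only [smul_eq_mul]
  ring

lemma half_two_smul (x : A3) : (1 / 2 : ℝ) • (2 * x) = x := by
  rw [show (2 : A3) * x = (2 : ℝ) • x by rw [Algebra.smul_def, map_ofNat], smul_smul]
  norm_num

theorem stmt_6 (v₁ v₂ : A3) (hv₁ : v₁ ∈ XY) (hv₂ : v₂ ∈ XY)
    (h₁ : phiGeo v₁ = bracket3 v₁ (wv 0)) (h₂ : phiGeo v₂ = bracket3 v₂ (wv 0)) :
    phiGeo (nabla3 v₁ v₂) = bracket3 (nabla3 v₁ v₂) (wv 0) := by
  have keyA : phiGeo (v₁ * D3 v₂) = bracket3 (v₁ * D3 v₂) (wv 0) + v₁ * v₂ * wv 2 := by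
    rw [Derivation.leibniz, phi_D3_comm, h₁, h₂, bracket3, bracket3, bracket3]
    simp only [map_sub, Derivation.leibniz, D3_wv, D3_yv, smul_eq_mul]
    ring
  have keyB : phiGeo (yv 0 * v₁ * v₂) =
      bracket3 (yv 0 * v₁ * v₂) (wv 0) - 2 * (v₁ * v₂ * wv 2) := by
    rw [Derivation.leibniz, Derivation.leibniz, phi_yv0, h₁, h₂, bracket3, bracket3, bracket3]
    simp only [map_sub, Derivation.leibniz, D3_wv, D3_yv, smul_eq_mul]
    ring
  have lin : bracket3 (v₁ * D3 v₂ + (1 / 2 : ℝ) • (yv 0 * v₁ * v₂)) (wv 0) =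
      bracket3 (v₁ * D3 v₂) (wv 0) + (1 / 2 : ℝ) • bracket3 (yv 0 * v₁ * v₂) (wv 0) := by
    simp only [bracket3, map_add, Derivation.map_smul, add_mul, mul_add, smul_mul_assoc,
      mul_smul_comm, smul_sub]
    abel
  rw [nabla3, map_add, Derivation.map_smul, keyA, keyB, lin, smul_sub, half_two_smul]
  abel
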